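/- arXiv:2208.06115 — 7 statements merged into one kernel-verified Lean document; each statement's English description precedes it below -/
import Mathlib

section
/- Define a sequence of positive integers by x_1 = 2 and x_{n+1} = x_n · (∑_{i=1}^n x_i) for n ≥ 1 (so x_1 = 2, x_2 = 4, x_3 = 24, ...). Then for any n ≥ 3, any subsets S, T ⊆ {1,...,n} with |S|, |T| ≥ 2, any i ∈ S and j ∈ T, if (i, S) ≠ (j, T) then x_i / (∑_{k∈S} x_k) ≠ x_j / (∑_{k∈T} x_k). -/
open Finset

namespace Stmt3Aux

/-- partial sums -/
def SX (x : ℕ → ℕ) (k : ℕ) : ℕ := ∑ i ∈ Finset.Icc 1 k, x i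

variable {x : ℕ → ℕ}

lemma xle_SX (k : ℕ) (hk : 1 ≤ k) : x k ≤ SX x k :=
  Finset.single_le_sum (f := x) (fun i _ => Nat.zero_le _) (Finset.mem_Icc.mpr ⟨hk, le_refl k⟩)

lemma xge (hx1 : x 1 = 2)
    (hrec : ∀ n ≥ 1, x (n + 1) = x n * ∑ i ∈ Finset.Icc 1 n, x i) :
    ∀ k, 1 ≤ k → 2 ≤ x k := by
  intro k
  induction k with
  | zero => omega
  | succ m ih =>
    intro _
    rcases Nat.eq_zero_or_pos m with hm | hm
    · subst hm; simp [hx1]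
    · have h1 : 2 ≤ x m := ih hm
      have h2 : x m ≤ SX x m := xle_SX m hm
      have h3 : x (m+1) = x m * SX x m := hrec m hm
      nlinarith

lemma SXge (hx1 : x 1 = 2)
    (hrec : ∀ n ≥ 1, x (n + 1) = x n * ∑ i ∈ Finset.Icc 1 n, x i)
    (k : ℕ) (hk : 1 ≤ k) : 2 ≤ SX x k :=
  le_trans (xge hx1 hrec k hk) (xle_SX k hk)

lemma Slt (hx1 : x 1 = 2)
    (hrec : ∀ n ≥ 1, x (n + 1) = x n * ∑ i ∈ Finset.Icc 1 n, x i) :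
    ∀ k, SX x k < x (k+1) := by
  intro k
  rcases Nat.eq_zero_or_pos k with hk | hk
  · subst hk
    have h0 : Finset.Icc 1 0 = (∅ : Finset ℕ) := by decide
    simp [SX, h0, hx1]
  · have h3 : x (k+1) = x k * SX x k := hrec k hk
    have h1 : 2 ≤ x k := xge hx1 hrec k hk
    have h2 : 2 ≤ SX x k := SXge hx1 hrec k hk
    nlinarith

lemma xprod (hx1 : x 1 = 2)
    (hrec : ∀ n ≥ 1, x (n + 1) = x n * ∑ i ∈ Finset.Icc 1 n, x i) :
    ∀ i, 1 ≤ i → ∀ j, i ≤ j → x j = x i * ∏ k ∈ Finset.Ico i j, SX x k := by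
  intro i hi j hij
  induction j, hij using Nat.le_induction with
  | base => simp
  | succ m him ih =>
    have h1m : 1 ≤ m := le_trans hi him
    calc x (m+1) = x m * SX x m := hrec m h1m
      _ = (x i * ∏ k ∈ Finset.Ico i m, SX x k) * SX x m := by rw [← ih]
      _ = x i * ∏ k ∈ Finset.Ico i (m+1), SX x k := by
          rw [Finset.prod_Ico_succ_top him, mul_assoc]

lemma xeq (hx1 : x 1 = 2)
    (hrec : ∀ n ≥ 1, x (n + 1) = x n * ∑ i ∈ Finset.Icc 1 n, x i)
    (K : ℕ) (hK : 1 ≤ K) : x K = 2 * ∏ k ∈ Finset.Ico 1 K, SX x k := by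
  have := xprod hx1 hrec 1 le_rfl K hK
  rwa [hx1] at this

/-- super-increasing : subset sums are unique -/
lemma uniq (hx1 : x 1 = 2)
    (hrec : ∀ n ≥ 1, x (n + 1) = x n * ∑ i ∈ Finset.Icc 1 n, x i) :
    ∀ n (S T : Finset ℕ), S ⊆ Finset.Icc 1 n → T ⊆ Finset.Icc 1 n →
      ∑ k ∈ S, x k = ∑ k ∈ T, x k → S = T := by
  intro n
  induction n with
  | zero =>
    intro S T hS hT _
    have h0 : Finset.Icc 1 0 = (∅ : Finset ℕ) := by decide
    rw [h0, Finset.subset_empty] at hS hT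
    rw [hS, hT]
  | succ n ih =>
    intro S T hS hT hsum
    have hsubS : (n+1) ∉ S → S ⊆ Finset.Icc 1 n := by
      intro h a ha
      have := Finset.mem_Icc.mp (hS ha)
      have : a ≠ n+1 := fun hc => h (hc ▸ ha)
      simp only [Finset.mem_Icc]; omega
    have hsubT : (n+1) ∉ T → T ⊆ Finset.Icc 1 n := by
      intro h a ha
      have := Finset.mem_Icc.mp (hT ha)
      have : a ≠ n+1 := fun hc => h (hc ▸ ha)
      simp only [Finset.mem_Icc]; omega
    have hbound : ∀ U : Finset ℕ, U ⊆ Finset.Icc 1 n → ∑ k ∈ U, x k < x (n+1) := by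
      intro U hU
      calc ∑ k ∈ U, x k ≤ SX x n := Finset.sum_le_sum_of_subset hU
        _ < x (n+1) := Slt hx1 hrec n
    by_cases hnS : (n+1) ∈ S <;> by_cases hnT : (n+1) ∈ T
    · have hS' : S.erase (n+1) ⊆ Finset.Icc 1 n := by
        intro a ha
        have h1 := Finset.mem_of_mem_erase ha
        have h2 := Finset.ne_of_mem_erase ha
        have := Finset.mem_Icc.mp (hS h1)
        simp only [Finset.mem_Icc]; omega
      have hT' : T.erase (n+1) ⊆ Finset.Icc 1 n := by
        intro a ha
        have h1 := Finset.mem_of_mem_erase ha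
        have h2 := Finset.ne_of_mem_erase ha
        have := Finset.mem_Icc.mp (hT h1)
        simp only [Finset.mem_Icc]; omega
      have e1 : ∑ k ∈ S.erase (n+1), x k + x (n+1) = ∑ k ∈ S, x k :=
        Finset.sum_erase_add _ _ hnS
      have e2 : ∑ k ∈ T.erase (n+1), x k + x (n+1) = ∑ k ∈ T, x k :=
        Finset.sum_erase_add _ _ hnT
      have heq : ∑ k ∈ S.erase (n+1), x k = ∑ k ∈ T.erase (n+1), x k := by omega
      have := ih _ _ hS' hT' heq
      calc S = insert (n+1) (S.erase (n+1)) := (Finset.insert_erase hnS).symm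
        _ = insert (n+1) (T.erase (n+1)) := by rw [this]
        _ = T := Finset.insert_erase hnT
    · exfalso
      have h1 : x (n+1) ≤ ∑ k ∈ S, x k :=
        Finset.single_le_sum (f := x) (fun i _ => Nat.zero_le _) hnS
      have h2 := hbound T (hsubT hnT)
      omega
    · exfalso
      have h1 : x (n+1) ≤ ∑ k ∈ T, x k :=
        Finset.single_le_sum (f := x) (fun i _ => Nat.zero_le _) hnT
      have h2 := hbound S (hsubS hnS)
      omega
    · exact ih _ _ (hsubS hnS) (hsubT hnT) hsum

/-- key: no cross-equality with i < j -/
lemma keylt (hx1 : x 1 = 2)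
    (hrec : ∀ n ≥ 1, x (n + 1) = x n * ∑ i ∈ Finset.Icc 1 n, x i)
    (n : ℕ) (S T : Finset ℕ) (hS : S ⊆ Finset.Icc 1 n) (hT : T ⊆ Finset.Icc 1 n)
    (hScard : 2 ≤ S.card) (hTcard : 2 ≤ T.card)
    (i j : ℕ) (hiS : i ∈ S) (hjT : j ∈ T) (hij : i < j) :
    x i * ∑ k ∈ T, x k ≠ x j * ∑ k ∈ S, x k := by
  intro heq
  have hSne : S.Nonempty := ⟨i, hiS⟩
  have hTne : T.Nonempty := ⟨j, hjT⟩
  set m := S.max' hSne with hm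
  set M := T.max' hTne with hM
  have him : i ≤ m := Finset.le_max' _ _ hiS
  have hjM : j ≤ M := Finset.le_max' _ _ hjT
  have h1i : 1 ≤ i := (Finset.mem_Icc.mp (hS hiS)).1
  have h1j : 1 ≤ j := (Finset.mem_Icc.mp (hT hjT)).1
  have h1m : 1 ≤ m := le_trans h1i him
  have h1M : 1 ≤ M := le_trans h1j hjM
  have hmS : m ∈ S := S.max'_mem hSne
  have hMT : M ∈ T := T.max'_mem hTne
  have hge : ∀ k ∈ S ∪ T, 2 ≤ x k := by
    intro k hk
    rcases Finset.mem_union.mp hk with h | h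
    · exact xge hx1 hrec k (Finset.mem_Icc.mp (hS h)).1
    · exact xge hx1 hrec k (Finset.mem_Icc.mp (hT h)).1
  -- sum bounds
  have hSsub : S ⊆ Finset.Icc 1 m := by
    intro a ha
    exact Finset.mem_Icc.mpr ⟨(Finset.mem_Icc.mp (hS ha)).1, Finset.le_max' _ _ ha⟩
  have hTsub : T ⊆ Finset.Icc 1 M := by
    intro a ha
    exact Finset.mem_Icc.mpr ⟨(Finset.mem_Icc.mp (hT ha)).1, Finset.le_max' _ _ ha⟩
  have hsplitS : SX x m = SX x (m-1) + x m := by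
    have : m - 1 + 1 = m := by omega
    rw [← this]
    exact Finset.sum_Icc_succ_top (by omega) x
  have hsplitT : SX x M = SX x (M-1) + x M := by
    have : M - 1 + 1 = M := by omega
    rw [← this]
    exact Finset.sum_Icc_succ_top (by omega) x
  have hSlt2 : ∑ k ∈ S, x k < 2 * x m := by
    have h1 : ∑ k ∈ S, x k ≤ SX x m := Finset.sum_le_sum_of_subset hSsub
    have h2 : SX x (m-1) < x m := by
      have := Slt hx1 hrec (m-1)
      have hmm : m - 1 + 1 = m := by omega
      rwa [hmm] at this
    omega
  have hTlt2 : ∑ k ∈ T, x k < 2 * x M := by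
    have h1 : ∑ k ∈ T, x k ≤ SX x M := Finset.sum_le_sum_of_subset hTsub
    have h2 : SX x (M-1) < x M := by
      have := Slt hx1 hrec (M-1)
      have hmm : M - 1 + 1 = M := by omega
      rwa [hmm] at this
    omega
  have hxmlt : x m < ∑ k ∈ S, x k := by
    have hne : (S.erase m).Nonempty := by
      rw [← Finset.card_pos, Finset.card_erase_of_mem hmS]; omega
    obtain ⟨a, ha⟩ := hne
    have haS := Finset.mem_of_mem_erase ha
    have hxa : 2 ≤ x a := hge a (Finset.mem_union_left _ haS)
    have h1 : x a ≤ ∑ k ∈ S.erase m, x k :=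
      Finset.single_le_sum (f := x) (fun i _ => Nat.zero_le _) ha
    have h2 : ∑ k ∈ S.erase m, x k + x m = ∑ k ∈ S, x k :=
      Finset.sum_erase_add _ _ hmS
    omega
  have hxMlt : x M < ∑ k ∈ T, x k := by
    have hne : (T.erase M).Nonempty := by
      rw [← Finset.card_pos, Finset.card_erase_of_mem hMT]; omega
    obtain ⟨a, ha⟩ := hne
    have haT := Finset.mem_of_mem_erase ha
    have hxa : 2 ≤ x a := hge a (Finset.mem_union_right _ haT)
    have h1 : x a ≤ ∑ k ∈ T.erase M, x k :=
      Finset.single_le_sum (f := x) (fun i _ => Nat.zero_le _) ha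
    have h2 : ∑ k ∈ T.erase M, x k + x M = ∑ k ∈ T, x k :=
      Finset.sum_erase_add _ _ hMT
    omega
  have hxi2 : 2 ≤ x i := xge hx1 hrec i h1i
  have hxj2 : 2 ≤ x j := xge hx1 hrec j h1j
  -- cross inequalities
  have I1 : x j * x m < 2 * (x i * x M) := by nlinarith [heq, hxmlt, hTlt2, hxi2, hxj2]
  have I2 : x i * x M < 2 * (x j * x m) := by nlinarith [heq, hxMlt, hSlt2, hxi2, hxj2]
  -- m ≤ M
  have hmM : m ≤ M := by
    by_contra hc
    push_neg at hc
    have hxm : x m = x M * ∏ k ∈ Finset.Ico M m, SX x k :=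
      xprod hx1 hrec M h1M m hc.le
    have hp1 : SX x M ≤ ∏ k ∈ Finset.Ico M m, SX x k :=
      Finset.single_le_prod'
        (fun k hk => le_trans one_le_two
          (SXge hx1 hrec k (le_trans h1M (Finset.mem_Ico.mp hk).1)))
        (Finset.mem_Ico.mpr ⟨le_rfl, hc⟩)
    have hp2 : 2 ≤ SX x M := SXge hx1 hrec M h1M
    have hxij : x i ≤ x j := by
      have h := xprod hx1 hrec i h1i j hij.le
      have hone : 0 < ∏ k ∈ Finset.Ico i j, SX x k :=
        Finset.prod_pos (fun k hk =>
          lt_of_lt_of_le two_pos (SXge hx1 hrec k (le_trans h1i (Finset.mem_Ico.mp hk).1)))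
      rw [h]
      exact Nat.le_mul_of_pos_right _ hone
    have h5 : 2 * (x i * x M) ≤ x j * x m := by
      calc 2 * (x i * x M) = x i * (x M * 2) := by ring
        _ ≤ x i * (x M * SX x M) := Nat.mul_le_mul_left _ (Nat.mul_le_mul_left _ hp2)
        _ ≤ x i * (x M * ∏ k ∈ Finset.Ico M m, SX x k) :=
            Nat.mul_le_mul_left _ (Nat.mul_le_mul_left _ hp1)
        _ = x i * x m := by rw [← hxm]
        _ ≤ x j * x m := Nat.mul_le_mul_right _ hxij
    exact absurd I1 (not_lt.mpr h5)
  set Q1 := ∏ k ∈ Finset.Ico i j, SX x k with hQ1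
  set Q2 := ∏ k ∈ Finset.Ico m M, SX x k with hQ2
  have hxj : x j = x i * Q1 := xprod hx1 hrec i h1i j hij.le
  have hxM : x M = x m * Q2 := xprod hx1 hrec m h1m M hmM
  have hxm2 : 2 ≤ x m := xge hx1 hrec m h1m
  have hQ1lt : Q1 < 2 * Q2 := by
    have h : (x i * x m) * Q1 < (x i * x m) * (2 * Q2) := by
      calc (x i * x m) * Q1 = x j * x m := by rw [hxj]; ring
        _ < 2 * (x i * x M) := I1
        _ = (x i * x m) * (2 * Q2) := by rw [hxM]; ring
    exact Nat.lt_of_mul_lt_mul_left h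
  have hQ2lt : Q2 < 2 * Q1 := by
    have h : (x i * x m) * Q2 < (x i * x m) * (2 * Q1) := by
      calc (x i * x m) * Q2 = x i * x M := by rw [hxM]; ring
        _ < 2 * (x j * x m) := I2
        _ = (x i * x m) * (2 * Q1) := by rw [hxj]; ring
    exact Nat.lt_of_mul_lt_mul_left h
  have hQ1ge : 2 ≤ Q1 := by
    have h1 : SX x i ≤ Q1 :=
      Finset.single_le_prod'
        (fun k hk => le_trans one_le_two
          (SXge hx1 hrec k (le_trans h1i (Finset.mem_Ico.mp hk).1)))
        (Finset.mem_Ico.mpr ⟨le_rfl, hij⟩)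
    exact le_trans (SXge hx1 hrec i h1i) h1
  have hmltM : m < M := by
    rcases Nat.eq_or_lt_of_le hmM with h | h
    · exfalso
      have : Q2 = 1 := by rw [hQ2, h, Finset.Ico_self, Finset.prod_empty]
      omega
    · exact h
  -- j = M
  have hjMeq : j = M := by
    by_contra hc
    have hjltM : j < M := lt_of_le_of_ne hjM hc
    set K := M - 1 with hK
    have hK1 : 1 ≤ K := by omega
    have h2 : SX x K ≤ Q2 :=
      Finset.single_le_prod'
        (fun k hk => le_trans one_le_two
          (SXge hx1 hrec k (le_trans h1m (Finset.mem_Ico.mp hk).1)))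
        (Finset.mem_Ico.mpr ⟨by omega, by omega⟩)
    have h3 : Q1 ≤ ∏ k ∈ Finset.Ico 1 K, SX x k := by
      apply Finset.prod_le_prod_of_subset_of_one_le'
      · intro a ha
        have := Finset.mem_Ico.mp ha
        exact Finset.mem_Ico.mpr ⟨by omega, by omega⟩
      · intro a ha _
        exact le_trans one_le_two (SXge hx1 hrec a (Finset.mem_Ico.mp ha).1)
    have h4 : x K = 2 * ∏ k ∈ Finset.Ico 1 K, SX x k := xeq hx1 hrec K hK1
    have h5 : x K ≤ SX x K := xle_SX K hK1
    omega
  -- i = m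
  have himeq : i = m := by
    by_contra hc
    have hiltm : i < m := lt_of_le_of_ne him hc
    have hmj : m ≤ j := by omega
    have hsplit : (∏ k ∈ Finset.Ico i m, SX x k) * (∏ k ∈ Finset.Ico m j, SX x k) = Q1 :=
      Finset.prod_Ico_consecutive _ him hmj
    have hQ2' : Q2 = ∏ k ∈ Finset.Ico m j, SX x k := by rw [hQ2, hjMeq]
    have h1 : SX x i ≤ ∏ k ∈ Finset.Ico i m, SX x k :=
      Finset.single_le_prod'
        (fun k hk => le_trans one_le_two
          (SXge hx1 hrec k (le_trans h1i (Finset.mem_Ico.mp hk).1)))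
        (Finset.mem_Ico.mpr ⟨le_rfl, hiltm⟩)
    have h2 : 2 ≤ SX x i := SXge hx1 hrec i h1i
    have h3 : 2 * Q2 ≤ Q1 := by
      calc 2 * Q2 ≤ SX x i * Q2 := Nat.mul_le_mul_right _ (by omega)
        _ = SX x i * ∏ k ∈ Finset.Ico m j, SX x k := by rw [hQ2']
        _ ≤ (∏ k ∈ Finset.Ico i m, SX x k) * (∏ k ∈ Finset.Ico m j, SX x k) :=
            Nat.mul_le_mul_right _ h1
        _ = Q1 := hsplit
    omega
  -- final contradiction : i = max S, j = max T
  set R := ∑ k ∈ S.erase i, x k with hR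
  set R' := ∑ k ∈ T.erase j, x k with hR'
  have hSsum : ∑ k ∈ S, x k = x i + R := by
    rw [hR, ← Finset.sum_erase_add _ _ hiS]; omega
  have hTsum : ∑ k ∈ T, x k = x j + R' := by
    rw [hR', ← Finset.sum_erase_add _ _ hjT]; omega
  have heq2 : x i * R' = x j * R := by
    have h := heq
    rw [hSsum, hTsum, Nat.mul_add, Nat.mul_add] at h
    have hcomm : x j * x i = x i * x j := Nat.mul_comm _ _
    omega
  have hR2 : 2 ≤ R := by
    have hne : (S.erase i).Nonempty := by
      rw [← Finset.card_pos, Finset.card_erase_of_mem hiS]; omega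
    obtain ⟨a, ha⟩ := hne
    have haS := Finset.mem_of_mem_erase ha
    have hxa : 2 ≤ x a := hge a (Finset.mem_union_left _ haS)
    have h1 : x a ≤ R := Finset.single_le_sum (f := x) (fun i _ => Nat.zero_le _) ha
    omega
  have hQP : SX x (j-1) ≤ Q1 :=
    Finset.single_le_prod'
      (fun k hk => le_trans one_le_two
        (SXge hx1 hrec k (le_trans h1i (Finset.mem_Ico.mp hk).1)))
      (Finset.mem_Ico.mpr ⟨by omega, by omega⟩)
  have hR'le : R' ≤ SX x (j-1) := by
    apply Finset.sum_le_sum_of_subset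
    intro a ha
    have h1 := Finset.mem_of_mem_erase ha
    have h2 := Finset.ne_of_mem_erase ha
    have h3 := Finset.mem_Icc.mp (hT h1)
    have h4 : a ≤ M := Finset.le_max' _ _ h1
    exact Finset.mem_Icc.mpr ⟨h3.1, by omega⟩
  have hRQ : R' = Q1 * R := by
    have h : x i * R' = x i * (Q1 * R) := by
      rw [heq2, hxj]; ring
    exact Nat.eq_of_mul_eq_mul_left (by omega) h
  have hSXj : 2 ≤ SX x (j-1) := SXge hx1 hrec (j-1) (by omega)
  have hfin : 2 * SX x (j-1) ≤ R' := by
    calc 2 * SX x (j-1) = SX x (j-1) * 2 := Nat.mul_comm _ _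
      _ ≤ Q1 * R := Nat.mul_le_mul hQP hR2
      _ = R' := hRQ.symm
  omega

end Stmt3Aux

/-- For the sequence x_1 = 2, x_{n+1} = x_n · ∑_{i=1}^n x_i, all MNL choice
probabilities x_i / ∑_{k∈S} x_k over assortments of size ≥ 2 are pairwise distinct
across distinct (product, assortment) pairs. -/
theorem stmt_3 (x : ℕ → ℕ) (hx1 : x 1 = 2)
    (hrec : ∀ n ≥ 1, x (n + 1) = x n * ∑ i ∈ Finset.Icc 1 n, x i)
    (n : ℕ) (hn : 3 ≤ n) (S T : Finset ℕ)
    (hS : S ⊆ Finset.Icc 1 n) (hT : T ⊆ Finset.Icc 1 n)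
    (hScard : 2 ≤ S.card) (hTcard : 2 ≤ T.card)
    (i j : ℕ) (hiS : i ∈ S) (hjT : j ∈ T) (hne : (i, S) ≠ (j, T)) :
    (x i : ℝ) / (∑ k ∈ S, (x k : ℝ)) ≠ (x j : ℝ) / (∑ k ∈ T, (x k : ℝ)) := by
  intro heqR
  have hxi2 : 2 ≤ x i := Stmt3Aux.xge hx1 hrec i (Finset.mem_Icc.mp (hS hiS)).1
  have hxj2 : 2 ≤ x j := Stmt3Aux.xge hx1 hrec j (Finset.mem_Icc.mp (hT hjT)).1
  have hSpos : 0 < ∑ k ∈ S, x k := by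
    have : x i ≤ ∑ k ∈ S, x k :=
      Finset.single_le_sum (f := x) (fun i _ => Nat.zero_le _) hiS
    omega
  have hTpos : 0 < ∑ k ∈ T, x k := by
    have : x j ≤ ∑ k ∈ T, x k :=
      Finset.single_le_sum (f := x) (fun i _ => Nat.zero_le _) hjT
    omega
  have hScast : (∑ k ∈ S, (x k : ℝ)) = ((∑ k ∈ S, x k : ℕ) : ℝ) := by push_cast; rfl
  have hTcast : (∑ k ∈ T, (x k : ℝ)) = ((∑ k ∈ T, x k : ℕ) : ℝ) := by push_cast; rfl
  have hSne0 : (∑ k ∈ S, (x k : ℝ)) ≠ 0 := by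
    rw [hScast]; exact Nat.cast_ne_zero.mpr (by omega)
  have hTne0 : (∑ k ∈ T, (x k : ℝ)) ≠ 0 := by
    rw [hTcast]; exact Nat.cast_ne_zero.mpr (by omega)
  rw [div_eq_div_iff hSne0 hTne0] at heqR
  have heqN : x i * ∑ k ∈ T, x k = x j * ∑ k ∈ S, x k := by
    have : ((x i * ∑ k ∈ T, x k : ℕ) : ℝ) = ((x j * ∑ k ∈ S, x k : ℕ) : ℝ) := by
      push_cast
      rw [hScast, hTcast] at heqR
      push_cast at heqR
      linarith
    exact_mod_cast this
  rcases lt_trichotomy i j with h | h | h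
  · exact Stmt3Aux.keylt hx1 hrec n S T hS hT hScard hTcard i j hiS hjT h heqN
  · subst h
    have hsum : ∑ k ∈ S, x k = ∑ k ∈ T, x k :=
      (Nat.eq_of_mul_eq_mul_left (by omega) heqN).symm
    have hST : S = T := Stmt3Aux.uniq hx1 hrec n S T hS hT hsum
    exact hne (by rw [hST])
  · exact Stmt3Aux.keylt hx1 hrec n T S hT hS hTcard hScard j i hjT hiS h heqN.symm
end

section
/- Suppose the choice probability collection p = (p_{i,S} : i ∈ S, S ∈ 𝒮) is MDM-representable, i.e., there exists a function λ : 𝒮 → ℝ such that for any two assortments S, T ∈ 𝒮 containing a common product i: λ(S) > λ(T) whenever p_{i,S} < p_{i,T}, and λ(S) = λ(T) whenever p_{i,S} = p_{i,T} ≠ 0. Then p satisfies the regularity property: for any S, T ∈ 𝒮 with S ⊆ T and i ∈ S, we have p_{i,S} ≥ p_{i,T}. -/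
/-- MDM-representable choice probabilities (via the λ characterization) are regular:
if S ⊆ T and i ∈ S then p_{i,S} ≥ p_{i,T}. -/
theorem stmt_5 (n : ℕ) (𝒮 : Finset (Finset (Fin n)))
    (p : Fin n → Finset (Fin n) → ℝ)
    (hpos : ∀ S ∈ 𝒮, ∀ i ∈ S, 0 ≤ p i S)
    (hsum : ∀ S ∈ 𝒮, ∑ i ∈ S, p i S = 1)
    (lam : Finset (Fin n) → ℝ)
    (hlt : ∀ S ∈ 𝒮, ∀ T ∈ 𝒮, ∀ i, i ∈ S → i ∈ T → p i S < p i T → lam T < lam S)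
    (heq : ∀ S ∈ 𝒮, ∀ T ∈ 𝒮, ∀ i, i ∈ S → i ∈ T → p i S = p i T → p i S ≠ 0 → lam S = lam T) :
    ∀ S ∈ 𝒮, ∀ T ∈ 𝒮, S ⊆ T → ∀ i ∈ S, p i T ≤ p i S := by
  intro S hS T hT hsub i hi
  by_contra h
  push_neg at h
  -- lam T < lam S
  have hTS : lam T < lam S := hlt S hS T hT i hi (hsub hi) h
  -- there exists j ∈ S with p j T < p j S
  have hex : ∃ j ∈ S, p j T < p j S := by
    by_contra hc
    push_neg at hc
    have hlt' : ∑ j ∈ S, p j S < ∑ j ∈ S, p j T :=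
      Finset.sum_lt_sum (fun j hj => hc j hj) ⟨i, hi, h⟩
    have h1 : ∑ j ∈ S, p j T ≤ ∑ j ∈ T, p j T :=
      Finset.sum_le_sum_of_subset_of_nonneg hsub
        (fun j hjT _ => hpos T hT j hjT)
    rw [hsum S hS, hsum T hT] at *
    linarith
  obtain ⟨j, hj, hjlt⟩ := hex
  exact absurd (hlt T hT S hS j (hsub hj) hj hjlt) (by linarith)
end

section
/- For n = 3 products with assortment collection 𝒮 = {{1,2,3},{1,2},{1,3},{2,3}}, the choice probabilities p_{i,{1,2,3}} = 1/3 for all i, p_{1,{1,2}} = 5/9, p_{2,{1,2}} = 4/9, p_{1,{1,3}} = 4/9, p_{3,{1,3}} = 5/9, p_{2,{2,3}} = 5/9, p_{3,{2,3}} = 4/9 are NOT MDM-representable: there is no function λ : 𝒮 → ℝ with λ(S) > λ(T) whenever p_{i,S} < p_{i,T} for a common product i. -/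
/-- The specific 3-product choice data of Table 2 is not MDM-representable: no
λ : 𝒮 → ℝ satisfies λ(S) > λ(T) whenever p_{i,S} < p_{i,T} for a common product i. -/
theorem stmt_9 (p : ℕ → Finset ℕ → ℝ)
    (h1A : p 1 {1,2,3} = 1/3) (h2A : p 2 {1,2,3} = 1/3) (h3A : p 3 {1,2,3} = 1/3)
    (h1B : p 1 {1,2} = 5/9) (h2B : p 2 {1,2} = 4/9)
    (h1C : p 1 {1,3} = 4/9) (h3C : p 3 {1,3} = 5/9)
    (h2D : p 2 {2,3} = 5/9) (h3D : p 3 {2,3} = 4/9) :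
    ¬ ∃ lam : Finset ℕ → ℝ,
        ∀ S ∈ ({{1,2,3},{1,2},{1,3},{2,3}} : Finset (Finset ℕ)),
          ∀ T ∈ ({{1,2,3},{1,2},{1,3},{2,3}} : Finset (Finset ℕ)),
            ∀ i, i ∈ S → i ∈ T → p i S < p i T → lam T < lam S := by
  rintro ⟨lam, h⟩
  have hB : ({1,2} : Finset ℕ) ∈ ({{1,2,3},{1,2},{1,3},{2,3}} : Finset (Finset ℕ)) := by decide
  have hC : ({1,3} : Finset ℕ) ∈ ({{1,2,3},{1,2},{1,3},{2,3}} : Finset (Finset ℕ)) := by decide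
  have hD : ({2,3} : Finset ℕ) ∈ ({{1,2,3},{1,2},{1,3},{2,3}} : Finset (Finset ℕ)) := by decide
  have e1 : lam {1,2} < lam {1,3} := by
    apply h {1,3} hC {1,2} hB 1 (by decide) (by decide)
    rw [h1C, h1B]; norm_num
  have e2 : lam {1,3} < lam {2,3} := by
    apply h {2,3} hD {1,3} hC 3 (by decide) (by decide)
    rw [h3D, h3C]; norm_num
  have e3 : lam {2,3} < lam {1,2} := by
    apply h {1,2} hB {2,3} hD 2 (by decide) (by decide)
    rw [h2B, h2D]; norm_num
  linarith
end

section
/- For n = 3 products and the full collection of assortments of size ≥ 2, every regular choice probability system is representable by a distribution over rankings (RUM). Specifically, setting P(1≻2≻3) = p_{2,{2,3}} − p_{2,{1,2,3}}, P(1≻3≻2) = p_{3,{2,3}} − p_{3,{1,2,3}}, P(2≻1≻3) = p_{1,{1,3}} − p_{1,{1,2,3}}, P(2≻3≻1) = p_{3,{1,3}} − p_{3,{1,2,3}}, P(3≻1≻2) = p_{1,{1,2}} − p_{1,{1,2,3}}, P(3≻2≻1) = p_{2,{1,2}} − p_{2,{1,2,3}} yields a probability distribution over the six rankings whose induced choice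 probabilities equal p. -/
open scoped Classical

noncomputable def inducedChoiceProb (P : Equiv.Perm (Fin 3) → ℝ) (i : Fin 3)
    (S : Finset (Fin 3)) : ℝ :=
  ∑ σ ∈ Finset.univ.filter (fun σ : Equiv.Perm (Fin 3) => ∀ j ∈ S, σ i ≤ σ j), P σ

open Equiv in
lemma perm3_sum (f : Equiv.Perm (Fin 3) → ℝ) :
    ∑ σ : Equiv.Perm (Fin 3), f σ =
      f 1 + f (swap 0 1) + f (swap 0 2) + f (swap 1 2)
        + f (swap 0 1 * swap 1 2) + f (swap 0 2 * swap 1 2) := by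
  rw [show (Finset.univ : Finset (Equiv.Perm (Fin 3))) =
    {1, swap 0 1, swap 0 2, swap 1 2, swap 0 1 * swap 1 2, swap 0 2 * swap 1 2} from by decide]
  simp (config := { decide := true }) [Finset.sum_insert, Finset.mem_insert]
  ring

/-- For n = 3 products (encoded 1,2,3 ↦ 0,1,2) and the full collection of
assortments of size ≥ 2, every regular choice probability system is representable
by a distribution over rankings, given explicitly by the Block–Marschak-type
differences: P(1≻2≻3) = p_{2,{2,3}} − p_{2,{1,2,3}}, etc. -/
theorem stmt_11 (p : Fin 3 → Finset (Fin 3) → ℝ)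
    (hpos : ∀ S ∈ ({{0,1},{0,2},{1,2},{0,1,2}} : Finset (Finset (Fin 3))), ∀ i ∈ S, 0 ≤ p i S)
    (hsum : ∀ S ∈ ({{0,1},{0,2},{1,2},{0,1,2}} : Finset (Finset (Fin 3))), ∑ i ∈ S, p i S = 1)
    (hreg : ∀ S ∈ ({{0,1},{0,2},{1,2},{0,1,2}} : Finset (Finset (Fin 3))),
      ∀ T ∈ ({{0,1},{0,2},{1,2},{0,1,2}} : Finset (Finset (Fin 3))),
        S ⊆ T → ∀ i ∈ S, p i T ≤ p i S)
    (P : Equiv.Perm (Fin 3) → ℝ)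
    (hP : P = fun σ =>
      if σ 0 = 0 ∧ σ 1 = 1 then p 1 {1,2} - p 1 {0,1,2}        -- 1≻2≻3
      else if σ 0 = 0 ∧ σ 1 = 2 then p 2 {1,2} - p 2 {0,1,2}   -- 1≻3≻2
      else if σ 0 = 1 ∧ σ 1 = 0 then p 0 {0,2} - p 0 {0,1,2}   -- 2≻1≻3
      else if σ 0 = 2 ∧ σ 1 = 0 then p 2 {0,2} - p 2 {0,1,2}   -- 2≻3≻1
      else if σ 0 = 1 ∧ σ 1 = 2 then p 0 {0,1} - p 0 {0,1,2}   -- 3≻1≻2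
      else p 1 {0,1} - p 1 {0,1,2}) :                          -- 3≻2≻1
    (∀ σ, 0 ≤ P σ) ∧ (∑ σ : Equiv.Perm (Fin 3), P σ = 1) ∧
    (∀ S ∈ ({{0,1},{0,2},{1,2},{0,1,2}} : Finset (Finset (Fin 3))),
      ∀ i ∈ S, inducedChoiceProb P i S = p i S) := by
  have h01 : p 0 {0,1} + p 1 {0,1} = 1 := by
    have := hsum {0,1} (by decide)
    simpa [Finset.sum_pair (show (0:Fin 3) ≠ 1 by decide)] using this
  have h02 : p 0 {0,2} + p 2 {0,2} = 1 := by
    have := hsum {0,2} (by decide)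
    simpa [Finset.sum_pair (show (0:Fin 3) ≠ 2 by decide)] using this
  have h12 : p 1 {1,2} + p 2 {1,2} = 1 := by
    have := hsum {1,2} (by decide)
    simpa [Finset.sum_pair (show (1:Fin 3) ≠ 2 by decide)] using this
  have h012 : p 0 {0,1,2} + p 1 {0,1,2} + p 2 {0,1,2} = 1 := by
    have := hsum {0,1,2} (by decide)
    simp (config := { decide := true }) [Finset.sum_insert, Finset.mem_insert] at this
    linarith
  have r01_0 : p 0 {0,1,2} ≤ p 0 {0,1} := hreg {0,1} (by decide) {0,1,2} (by decide) (by decide) 0 (by decide)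
  have r01_1 : p 1 {0,1,2} ≤ p 1 {0,1} := hreg {0,1} (by decide) {0,1,2} (by decide) (by decide) 1 (by decide)
  have r02_0 : p 0 {0,1,2} ≤ p 0 {0,2} := hreg {0,2} (by decide) {0,1,2} (by decide) (by decide) 0 (by decide)
  have r02_2 : p 2 {0,1,2} ≤ p 2 {0,2} := hreg {0,2} (by decide) {0,1,2} (by decide) (by decide) 2 (by decide)
  have r12_1 : p 1 {0,1,2} ≤ p 1 {1,2} := hreg {1,2} (by decide) {0,1,2} (by decide) (by decide) 1 (by decide)
  have r12_2 : p 2 {0,1,2} ≤ p 2 {1,2} := hreg {1,2} (by decide) {0,1,2} (by decide) (by decide) 2 (by decide)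
  subst hP
  refine ⟨?_, ?_, ?_⟩
  · intro σ
    simp only []
    split_ifs <;> linarith
  · rw [perm3_sum]
    simp (config := { decide := true }) only [if_true, if_false]
    linarith
  · intro S hS
    fin_cases hS <;> intro i hi <;> fin_cases hi <;>
      · unfold inducedChoiceProb
        rw [Finset.sum_filter, perm3_sum]
        simp (config := { decide := true }) only [if_true, if_false]
        linarith
end

section
/- The set of MDM-representable choice probability collections is not convex: there exist choice probability collections x and y over 𝒮 = {{1,2},{1,3},{2,3}} with n = 3 products, each MDM-representable, such that w = 0.4x + 0.6y is not MDM-representable. Concretely, x_{1,{1,2}}=0.3, x_{2,{1,2}}=0.7, x_{1,{1,3}}=0.9, x_{3,{1,3}}=0.1, x_{2,{2,3}}=0.8, x_{3,{2,3}}=0.2 and y_{1,{1,2}}=0.75, y_{2,{1,2}}=0.25, y_{1,{1,3}}=0.1, y_{3,{1,3}}=0.9, y_{2,{2,3}}=0.2, y_{3,{2,3}}=0.8 are both MDM-representable, but their convex combination with weights (0.4, 0.6) admits no valid λ. -/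
/-- MDM-representability of a choice probability collection p over a collection 𝒮:
there exists λ with λ(S) > λ(T) whenever p_{i,S} < p_{i,T} and λ(S) = λ(T) whenever
p_{i,S} = p_{i,T} ≠ 0, for all assortments S, T sharing product i. -/
def MDMRep (𝒮 : Finset (Finset ℕ)) (p : ℕ → Finset ℕ → ℝ) : Prop :=
  ∃ lam : Finset ℕ → ℝ, ∀ S ∈ 𝒮, ∀ T ∈ 𝒮, ∀ i, i ∈ S → i ∈ T →
    (p i S < p i T → lam T < lam S) ∧ (p i S = p i T → p i S ≠ 0 → lam S = lam T)

/-- The set of MDM-representable choice probability collections is not convex: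
x and y below are MDM-representable over 𝒮 = {{1,2},{1,3},{2,3}}, but
w = 0.4x + 0.6y is not. -/
theorem stmt_13 (x y : ℕ → Finset ℕ → ℝ)
    (hx1B : x 1 {1,2} = 0.3) (hx2B : x 2 {1,2} = 0.7)
    (hx1C : x 1 {1,3} = 0.9) (hx3C : x 3 {1,3} = 0.1)
    (hx2D : x 2 {2,3} = 0.8) (hx3D : x 3 {2,3} = 0.2)
    (hy1B : y 1 {1,2} = 0.75) (hy2B : y 2 {1,2} = 0.25)
    (hy1C : y 1 {1,3} = 0.1) (hy3C : y 3 {1,3} = 0.9)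
    (hy2D : y 2 {2,3} = 0.2) (hy3D : y 3 {2,3} = 0.8) :
    MDMRep {{1,2},{1,3},{2,3}} x ∧ MDMRep {{1,2},{1,3},{2,3}} y ∧
    ¬ MDMRep {{1,2},{1,3},{2,3}} (fun i S => 0.4 * x i S + 0.6 * y i S) := by
  refine ⟨⟨fun S => -(((S.sum id : ℕ) : ℝ)), ?_⟩,
         ⟨fun S => (((S.sum id : ℕ) : ℝ)), ?_⟩, ?_⟩
  · intro S hS T hT i hiS hiT
    simp only [Finset.mem_insert, Finset.mem_singleton] at hS hT
    rcases hS with rfl|rfl|rfl <;> rcases hT with rfl|rfl|rfl <;>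
      simp only [Finset.mem_insert, Finset.mem_singleton] at hiS hiT <;>
      rcases hiS with rfl|rfl <;> simp_all <;> norm_num
  · intro S hS T hT i hiS hiT
    simp only [Finset.mem_insert, Finset.mem_singleton] at hS hT
    rcases hS with rfl|rfl|rfl <;> rcases hT with rfl|rfl|rfl <;>
      simp only [Finset.mem_insert, Finset.mem_singleton] at hiS hiT <;>
      rcases hiS with rfl|rfl <;> simp_all <;> norm_num
  · rintro ⟨lam, h⟩
    have m1 : ({1,2} : Finset ℕ) ∈ ({{1,2},{1,3},{2,3}} : Finset (Finset ℕ)) := by decide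
    have m2 : ({1,3} : Finset ℕ) ∈ ({{1,2},{1,3},{2,3}} : Finset (Finset ℕ)) := by decide
    have m3 : ({2,3} : Finset ℕ) ∈ ({{1,2},{1,3},{2,3}} : Finset (Finset ℕ)) := by decide
    have h1 := (h {1,3} m2 {1,2} m1 1 (by decide) (by decide)).1
    have h2 := (h {1,2} m1 {2,3} m3 2 (by decide) (by decide)).1
    have h3 := (h {2,3} m3 {1,3} m2 3 (by decide) (by decide)).1
    simp only at h1 h2 h3
    rw [hx1C, hy1C, hx1B, hy1B] at h1
    rw [hx2B, hy2B, hx2D, hy2D] at h2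
    rw [hx3D, hy3D, hx3C, hy3C] at h3
    have := h1 (by norm_num)
    have := h2 (by norm_num)
    have := h3 (by norm_num)
    linarith
end

section
/- Checking MDM-representability reduces to a linear program: the choice data p over collection 𝒮 is MDM-representable if and only if the optimal value of max ε subject to λ_S ≥ λ_T + ε whenever p_{i,S} < p_{i,T} (common product i), λ_S = λ_T whenever p_{i,S} = p_{i,T} ≠ 0 (common product i), and 0 ≤ λ_S ≤ 1 for all S, is strictly positive. Moreover, if p is MDM-representable then this LP admits a feasible solution with ε > 0 and all λ_S ∈ [0,1]. -/
/-- Checking MDM-representability reduces to a linear program: p is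
MDM-representable iff there exist λ with values in [0,1] on 𝒮 and ε > 0 such that
λ_S ≥ λ_T + ε whenever p_{i,S} < p_{i,T} and λ_S = λ_T whenever
p_{i,S} = p_{i,T} ≠ 0 (for common products i); i.e. the LP max ε has a feasible
solution with strictly positive ε. -/
theorem stmt_16 (n : ℕ) (𝒮 : Finset (Finset (Fin n)))
    (p : Fin n → Finset (Fin n) → ℝ) :
    (∃ lam : Finset (Fin n) → ℝ,
        ∀ S ∈ 𝒮, ∀ T ∈ 𝒮, ∀ i, i ∈ S → i ∈ T →
          (p i S < p i T → lam T < lam S) ∧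
          (p i S = p i T → p i S ≠ 0 → lam S = lam T)) ↔
    (∃ (lam : Finset (Fin n) → ℝ) (ε : ℝ), 0 < ε ∧
        (∀ S ∈ 𝒮, 0 ≤ lam S ∧ lam S ≤ 1) ∧
        ∀ S ∈ 𝒮, ∀ T ∈ 𝒮, ∀ i, i ∈ S → i ∈ T →
          (p i S < p i T → lam T + ε ≤ lam S) ∧
          (p i S = p i T → p i S ≠ 0 → lam S = lam T)) := by
  constructor
  · rintro ⟨lam, h⟩
    rcases 𝒮.eq_empty_or_nonempty with h𝒮 | h𝒮
    · exact ⟨0, 1, one_pos, by simp [h𝒮], by simp [h𝒮]⟩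
    · set V := 𝒮.image lam with hV
      have hVne : V.Nonempty := h𝒮.image _
      have hN : (0:ℝ) < (V.card : ℝ) := by exact_mod_cast hVne.card_pos
      refine ⟨fun S => ((V.filter (fun v => v ≤ lam S)).card : ℝ) / V.card,
        1 / V.card, by positivity, ?_, ?_⟩
      · intro S hS
        constructor
        · positivity
        · rw [div_le_one hN]
          exact_mod_cast Finset.card_filter_le _ _
      · intro S hS T hT i hiS hiT
        have hST := h S hS T hT i hiS hiT
        constructor
        · intro hp
          have hlt : lam T < lam S := hST.1 hp
          have hsubset : V.filter (fun v => v ≤ lam T) ⊆ V.filter (fun v => v ≤ lam S) :=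
            Finset.monotone_filter_right V (fun v _ hv => le_trans hv hlt.le)
          have hmemS : lam S ∈ V.filter (fun v => v ≤ lam S) :=
            Finset.mem_filter.mpr ⟨Finset.mem_image_of_mem lam hS, le_refl _⟩
          have hnot : lam S ∉ V.filter (fun v => v ≤ lam T) := by
            simp [Finset.mem_filter, not_le.mpr hlt]
          have hsub : V.filter (fun v => v ≤ lam T) ⊂ V.filter (fun v => v ≤ lam S) :=
            ⟨hsubset, fun hc => hnot (hc hmemS)⟩
          have hcard : (V.filter (fun v => v ≤ lam T)).card + 1 ≤
              (V.filter (fun v => v ≤ lam S)).card :=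
            Nat.succ_le_of_lt (Finset.card_lt_card hsub)
          have hcardR : ((V.filter (fun v => v ≤ lam T)).card : ℝ) + 1 ≤
              ((V.filter (fun v => v ≤ lam S)).card : ℝ) := by exact_mod_cast hcard
          show ((V.filter (fun v => v ≤ lam T)).card : ℝ) / V.card + 1 / V.card ≤
              ((V.filter (fun v => v ≤ lam S)).card : ℝ) / V.card
          rw [← add_div]
          gcongr
        · intro hpe hpne
          have : lam S = lam T := hST.2 hpe hpne
          simp [this]
  · rintro ⟨lam, ε, hε, _, h⟩
    refine ⟨lam, fun S hS T hT i hiS hiT => ?_⟩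
    have hST := h S hS T hT i hiS hiT
    exact ⟨fun hp => by linarith [hST.1 hp], hST.2⟩
end

section
/- Let 𝒮 = {S_1 ⊂ S_2 ⊂ ... ⊂ S_m} be nested and p a regular choice probability system on 𝒮 (p_{i,S_j} ≥ p_{i,S_k} for j ≤ k, i ∈ S_j, with ∑_{i∈S} p_{i,S} = 1). Define flow values on the directed graph with nodes {0, 1, ..., m, m+1}: r(m+1, j) = p_{j,S_m} for j = 1,...,m; r(i, j) = p_{j,S_{i−1}} − p_{j,S_i} for 2 ≤ i ≤ m and 1 ≤ j ≤ i−1 (with the convention S_k = {1,...,k}); r(1,0) = 1. Then all flow values are nonnegative, and flow conservation holds at every node j ∈ {1,...,m}: the total inflow ∑_{k>j} r(k,j) equals the total outflow ∑_{k<j} r(j,k), and both equal p_{j,S_j}. -/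
lemma tele_aux (f : ℕ → ℝ) (j : ℕ) : ∀ m, j ≤ m →
    ∑ k ∈ Finset.Icc (j+1) m, (f (k-1) - f k) = f j - f m := by
  intro m
  induction m with
  | zero => intro h; interval_cases j; simp
  | succ n ih =>
    intro h
    rcases Nat.lt_or_ge j (n+1) with h' | h'
    · have hj : j ≤ n := Nat.lt_succ_iff.mp h'
      rw [Finset.sum_Icc_succ_top (by omega : j+1 ≤ n+1), ih hj]
      simp
    · have : j = n+1 := le_antisymm h h'
      subst this
      simp

/-- Flow construction for regular choice data on the nested collection
S_k = {1,...,k}, k = 1,...,m. With r(m+1,j) = p_{j,S_m}, r(i,j) =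
p_{j,S_{i−1}} − p_{j,S_i} (2 ≤ i ≤ m, 1 ≤ j ≤ i−1), r(1,0) = 1: all flow values
are nonnegative, and at every node j ∈ {1,...,m} inflow = outflow = p_{j,S_j}. -/
theorem stmt_19 (m : ℕ) (hm : 1 ≤ m)
    (p : ℕ → Finset ℕ → ℝ)
    (hpos : ∀ k, 1 ≤ k → k ≤ m → ∀ i ∈ Finset.Icc 1 k, 0 ≤ p i (Finset.Icc 1 k))
    (hsum : ∀ k, 1 ≤ k → k ≤ m → ∑ i ∈ Finset.Icc 1 k, p i (Finset.Icc 1 k) = 1)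
    (hreg : ∀ j k, 1 ≤ j → j ≤ k → k ≤ m → ∀ i ∈ Finset.Icc 1 j,
      p i (Finset.Icc 1 k) ≤ p i (Finset.Icc 1 j))
    (r : ℕ → ℕ → ℝ)
    (hr1 : ∀ j, 1 ≤ j → j ≤ m → r (m + 1) j = p j (Finset.Icc 1 m))
    (hr2 : ∀ i j, 2 ≤ i → i ≤ m → 1 ≤ j → j ≤ i - 1 →
      r i j = p j (Finset.Icc 1 (i - 1)) - p j (Finset.Icc 1 i))
    (hr3 : r 1 0 = 1) :
    (∀ j, 1 ≤ j → j ≤ m → 0 ≤ r (m + 1) j) ∧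
    (∀ i j, 2 ≤ i → i ≤ m → 1 ≤ j → j ≤ i - 1 → 0 ≤ r i j) ∧
    (∀ j, 1 ≤ j → j ≤ m →
      ∑ k ∈ Finset.Icc (j + 1) (m + 1), r k j = p j (Finset.Icc 1 j)) ∧
    (∀ j, 2 ≤ j → j ≤ m →
      ∑ k ∈ Finset.Icc 1 (j - 1), r j k = p j (Finset.Icc 1 j)) ∧
    r 1 0 = p 1 (Finset.Icc 1 1) := by
  have hp1 : p 1 (Finset.Icc 1 1) = 1 := by
    have := hsum 1 le_rfl hm
    simpa using this
  refine ⟨?_, ?_, ?_, ?_, ?_⟩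
  · intro j h1 h2
    rw [hr1 j h1 h2]
    exact hpos m hm le_rfl j (Finset.mem_Icc.mpr ⟨h1, h2⟩)
  · intro i j h2i him h1j hji
    rw [hr2 i j h2i him h1j hji]
    have := hreg (i-1) i (by omega) (by omega) him j (Finset.mem_Icc.mpr ⟨h1j, hji⟩)
    linarith
  · intro j h1 h2
    rw [Finset.sum_Icc_succ_top (by omega : j+1 ≤ m+1), hr1 j h1 h2]
    have hc : ∑ k ∈ Finset.Icc (j+1) m, r k j
        = ∑ k ∈ Finset.Icc (j+1) m, (p j (Finset.Icc 1 (k-1)) - p j (Finset.Icc 1 k)) := by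
      refine Finset.sum_congr rfl fun k hk => ?_
      rw [Finset.mem_Icc] at hk
      exact hr2 k j (by omega) hk.2 h1 (by omega)
    rw [hc, tele_aux (fun k => p j (Finset.Icc 1 k)) j m h2]
    ring
  · intro j h2 hjm
    obtain ⟨n, rfl⟩ : ∃ n, j = n + 1 := ⟨j - 1, by omega⟩
    have hn : 1 ≤ n := by omega
    have hc : ∑ k ∈ Finset.Icc 1 (n+1-1), r (n+1) k
        = ∑ k ∈ Finset.Icc 1 n, (p k (Finset.Icc 1 n) - p k (Finset.Icc 1 (n+1))) := by
      refine Finset.sum_congr (by simp) fun k hk => ?_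
      rw [Finset.mem_Icc] at hk
      have := hr2 (n+1) k h2 hjm hk.1 (by omega)
      simpa using this
    rw [hc, Finset.sum_sub_distrib, hsum n hn (by omega)]
    have hs := hsum (n+1) (by omega) hjm
    rw [Finset.sum_Icc_succ_top (by omega : 1 ≤ n+1)] at hs
    linarith
  · rw [hr3, hp1]
end
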